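/- Among ideal hyperbolic tetrahedra, the regular one has maximal volume: for all real α, β, γ > 0 with α + β + γ = π, one has Λ(α) + Λ(β) + Λ(γ) ≤ 3Λ(π/3), with equality if and only if α = β = γ = π/3. -/

import Mathlib

open MeasureTheory Real

/-- The Lobachevsky function `Λ(θ) = -∫₀^θ log |2 sin t| dt`. -/
noncomputable def lobachevsky (θ : ℝ) : ℝ :=
  -∫ t in (0:ℝ)..θ, Real.log |2 * Real.sin t|

/-!
Since `Λ' = -log |2 sin|`, the derivative of `x ↦ Λ(m - x) + Λ(m + x)` is
`log (sin (m - x) / sin (m + x)) < 0` for `0 < x < m < π / 2`, because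
`sin (m + x) - sin (m - x) = 2 cos m sin x`. So replacing `α, β` by their mean `m` strictly
increases the volume unless `α = β`. The isosceles volume `2 Λ(m) + Λ(π - 2m)` has derivative
`2 log (2 cos m)`, which changes sign exactly at `m = π / 3`.
-/

open Set intervalIntegral

lemma intervalIntegrable_log_abs_two_mul_sin (a b : ℝ) :
    IntervalIntegrable (fun t => log |2 * sin t|) volume a b := by
  simpa [Real.norm_eq_abs] using
    (analyticOnNhd_const.mul analyticOnNhd_sin).meromorphicOn.intervalIntegrable_log_norm
      (f := fun t => 2 * sin t) (a := a) (b := b)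

@[fun_prop]
lemma continuous_lobachevsky : Continuous lobachevsky :=
  (continuous_primitive (fun a b => intervalIntegrable_log_abs_two_mul_sin a b) 0).neg

lemma hasDerivAt_lobachevsky {θ : ℝ} (h : sin θ ≠ 0) :
    HasDerivAt lobachevsky (-log |2 * sin θ|) θ := by
  have hcont : Continuous fun t => |2 * sin t| := by fun_prop
  refine (integral_hasDerivAt_right (intervalIntegrable_log_abs_two_mul_sin 0 θ) ?_ ?_).neg
  · exact (measurable_log.comp hcont.measurable).stronglyMeasurable.stronglyMeasurableAtFilter
  · exact hcont.continuousAt.log (by simpa using h)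

lemma strictAntiOn_lobachevsky_sub_add_lobachevsky_add {m : ℝ} (hm : m < π / 2) :
    StrictAntiOn (fun x => lobachevsky (m - x) + lobachevsky (m + x)) (Icc 0 m) := by
  refine strictAntiOn_of_deriv_neg (convex_Icc 0 m) (by fun_prop) fun x hx => ?_
  rw [interior_Icc] at hx
  obtain ⟨hx0, hxm⟩ := hx
  have hsin_sub : 0 < sin (m - x) := sin_pos_of_pos_of_lt_pi (by linarith) (by linarith)
  have hsin_add : 0 < sin (m + x) := sin_pos_of_pos_of_lt_pi (by linarith) (by linarith)
  have hsin_lt : sin (m - x) < sin (m + x) := by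
    have hcos : 0 < cos m := cos_pos_of_mem_Ioo ⟨by linarith, hm⟩
    have hsin : 0 < sin x := sin_pos_of_pos_of_lt_pi hx0 (by linarith)
    nlinarith [sin_add m x, sin_sub m x]
  have hderiv : HasDerivAt (fun x => lobachevsky (m - x) + lobachevsky (m + x))
      (- -log |2 * sin (m - x)| + -log |2 * sin (m + x)|) x :=
    ((hasDerivAt_lobachevsky hsin_sub.ne').comp_const_sub m x).add
      ((hasDerivAt_lobachevsky hsin_add.ne').comp_const_add m x)
  rw [hderiv.deriv, abs_of_pos (by positivity), abs_of_pos (by positivity)]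
  linarith [log_lt_log (by positivity) (by linarith : 2 * sin (m - x) < 2 * sin (m + x))]

lemma lobachevsky_add_lt_two_mul_midpoint {α β : ℝ} (hα : 0 ≤ α) (hβ : 0 ≤ β)
    (hαβ : α + β < π) (hne : α ≠ β) :
    lobachevsky α + lobachevsky β < 2 * lobachevsky ((α + β) / 2) := by
  wlog hlt : α < β generalizing α β
  · rw [add_comm α, add_comm (lobachevsky α)]
    exact this hβ hα (by linarith) hne.symm (lt_of_le_of_ne (not_lt.mp hlt) hne.symm)
  have h := strictAntiOn_lobachevsky_sub_add_lobachevsky_add (m := (α + β) / 2) (by linarith)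
    ⟨le_rfl, by linarith⟩ ⟨by linarith, by linarith⟩ (by linarith : 0 < (β - α) / 2)
  simp only [sub_zero, add_zero, ← two_mul] at h
  rwa [show (α + β) / 2 - (β - α) / 2 = α by ring, show (α + β) / 2 + (β - α) / 2 = β by ring] at h

lemma lobachevsky_add_le_two_mul_midpoint {α β : ℝ} (hα : 0 ≤ α) (hβ : 0 ≤ β)
    (hαβ : α + β < π) :
    lobachevsky α + lobachevsky β ≤ 2 * lobachevsky ((α + β) / 2) := by
  rcases eq_or_ne α β with rfl | hne
  · rw [add_self_div_two, two_mul]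
  · exact (lobachevsky_add_lt_two_mul_midpoint hα hβ hαβ hne).le

noncomputable def isoscelesVolume (m : ℝ) : ℝ := 2 * lobachevsky m + lobachevsky (π - 2 * m)

lemma hasDerivAt_isoscelesVolume {m : ℝ} (hsin : sin m ≠ 0) (hcos : cos m ≠ 0) :
    HasDerivAt isoscelesVolume (2 * log |2 * cos m|) m := by
  have hsin2 : sin (π - 2 * m) ≠ 0 := by
    rw [sin_pi_sub, sin_two_mul]; simp [hsin, hcos]
  have hcomp : HasDerivAt (fun y => lobachevsky (π - 2 * y))
      (-log |2 * sin (π - 2 * m)| * -(2 * 1)) m :=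
    (hasDerivAt_lobachevsky hsin2).comp (h := fun y => π - 2 * y) m
      (((hasDerivAt_id m).const_mul 2).const_sub π)
  have h : HasDerivAt isoscelesVolume
      (2 * -log |2 * sin m| + -log |2 * sin (π - 2 * m)| * -(2 * 1)) m :=
    ((hasDerivAt_lobachevsky hsin).const_mul 2).add hcomp
  refine h.congr_deriv ?_
  rw [sin_pi_sub, sin_two_mul,
    show 2 * (2 * sin m * cos m) = (2 * sin m) * (2 * cos m) by ring, abs_mul (2 * sin m),
    log_mul (abs_ne_zero.mpr (mul_ne_zero two_ne_zero hsin))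
      (abs_ne_zero.mpr (mul_ne_zero two_ne_zero hcos))]
  ring

lemma isoscelesVolume_pi_div_three : isoscelesVolume (π / 3) = 3 * lobachevsky (π / 3) := by
  rw [isoscelesVolume, show π - 2 * (π / 3) = π / 3 by ring]
  ring

lemma strictMonoOn_isoscelesVolume : StrictMonoOn isoscelesVolume (Icc 0 (π / 3)) := by
  refine strictMonoOn_of_deriv_pos (convex_Icc _ _)
    (by unfold isoscelesVolume; fun_prop) fun m hm => ?_
  rw [interior_Icc] at hm
  obtain ⟨hm0, hm3⟩ := hm
  have hcos : 1 / 2 < cos m := by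
    rw [← cos_pi_div_three]
    exact cos_lt_cos_of_nonneg_of_le_pi hm0.le (by linarith [pi_pos]) hm3
  rw [(hasDerivAt_isoscelesVolume (sin_pos_of_pos_of_lt_pi hm0 (by linarith [pi_pos])).ne'
    (by linarith)).deriv]
  have := log_pos (by rw [abs_of_pos (by linarith)]; linarith : 1 < |2 * cos m|)
  linarith

lemma strictAntiOn_isoscelesVolume : StrictAntiOn isoscelesVolume (Icc (π / 3) (π / 2)) := by
  refine strictAntiOn_of_deriv_neg (convex_Icc _ _)
    (by unfold isoscelesVolume; fun_prop) fun m hm => ?_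
  rw [interior_Icc] at hm
  obtain ⟨hm3, hm2⟩ := hm
  have hcos_pos : 0 < cos m := cos_pos_of_mem_Ioo ⟨by linarith [pi_pos], hm2⟩
  have hcos : cos m < 1 / 2 := by
    rw [← cos_pi_div_three]
    exact cos_lt_cos_of_nonneg_of_le_pi (by linarith [pi_pos]) (by linarith [pi_pos]) hm3
  rw [(hasDerivAt_isoscelesVolume (sin_pos_of_pos_of_lt_pi (by linarith [pi_pos])
    (by linarith [pi_pos])).ne' hcos_pos.ne').deriv]
  have := log_neg (by positivity) (by rw [abs_of_pos (by linarith)]; linarith : |2 * cos m| < 1)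
  linarith

lemma isoscelesVolume_lt_of_ne {m : ℝ} (h0 : 0 ≤ m) (h2 : m ≤ π / 2) (hne : m ≠ π / 3) :
    isoscelesVolume m < 3 * lobachevsky (π / 3) := by
  rw [← isoscelesVolume_pi_div_three]
  rcases hne.lt_or_gt with h | h
  · exact strictMonoOn_isoscelesVolume ⟨h0, h.le⟩ ⟨by linarith [pi_pos], le_rfl⟩ h
  · exact strictAntiOn_isoscelesVolume ⟨le_rfl, by linarith⟩ ⟨h.le, h2⟩ h

lemma isoscelesVolume_le {m : ℝ} (h0 : 0 ≤ m) (h2 : m ≤ π / 2) :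
    isoscelesVolume m ≤ 3 * lobachevsky (π / 3) := by
  rcases eq_or_ne m (π / 3) with rfl | hne
  · exact isoscelesVolume_pi_div_three.le
  · exact (isoscelesVolume_lt_of_ne h0 h2 hne).le

/-- Among ideal tetrahedra, the regular one has maximal volume, and it is the
unique maximizer. -/
theorem idealTetrahedron_volume_le_regular {α β γ : ℝ}
    (hα : 0 < α) (hβ : 0 < β) (hγ : 0 < γ) (hsum : α + β + γ = Real.pi) :
    lobachevsky α + lobachevsky β + lobachevsky γ ≤ 3 * lobachevsky (Real.pi / 3) ∧
      (lobachevsky α + lobachevsky β + lobachevsky γ = 3 * lobachevsky (Real.pi / 3) ↔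
        α = Real.pi / 3 ∧ β = Real.pi / 3 ∧ γ = Real.pi / 3) := by
  set m := (α + β) / 2 with hm
  have hαβ : α + β < π := by linarith
  have hm0 : 0 ≤ m := by linarith
  have hm2 : m ≤ π / 2 := by linarith
  have hiso : isoscelesVolume m = 2 * lobachevsky m + lobachevsky γ := by
    rw [isoscelesVolume, show π - 2 * m = γ by linarith]
  have hpair := lobachevsky_add_le_two_mul_midpoint hα.le hβ.le hαβ
  have hmax := isoscelesVolume_le hm0 hm2
  refine ⟨by linarith, fun heq => ?_, ?_⟩
  · have hα_eq_β : α = β := by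
      by_contra hne
      linarith [lobachevsky_add_lt_two_mul_midpoint hα.le hβ.le hαβ hne]
    have hm3 : m = π / 3 := by
      by_contra hne
      linarith [isoscelesVolume_lt_of_ne hm0 hm2 hne]
    exact ⟨by linarith, by linarith, by linarith⟩
  · rintro ⟨rfl, rfl, rfl⟩
    ring
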